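/- For every integer m ≥ 3, the Sperner systems U^{2m+1}_1 and U^{2m+1}_2 (over E_m ∪ {0}) are not isomorphic, and the Sperner systems U^{2m+2}_1 and U^{2m+2}_2 (over E_m ∪ {0, 0'}) are not isomorphic. -/

import Mathlib

section SetSystems

variable {α β : Type*}

/-- A family of finite sets is a Sperner system (an antichain under inclusion). -/
def IsSperner [DecidableEq α] (F : Finset (Finset α)) : Prop :=
  ∀ S ∈ F, ∀ T ∈ F, S ⊆ T → S = T

/-- Isomorphism of set systems with the given ground sets: a bijection `σ` of the
ground set `A` onto the ground set `B` mapping the family `F` onto the family `G`. -/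
def SystemIso [DecidableEq α] [DecidableEq β] (A : Finset α) (F : Finset (Finset α))
    (B : Finset β) (G : Finset (Finset β)) : Prop :=
  ∃ σ : α → β, Set.BijOn σ ↑A ↑B ∧ F.image (fun S => S.image σ) = G

/-- Identification of `v` with `u` inside a block: `S_I = (S ∖ {v}) ∪ {u}` if `v ∈ S`,
and `S_I = S` otherwise. -/
def identifyBlock [DecidableEq α] (u v : α) (S : Finset α) : Finset α :=
  if v ∈ S then insert u (S.erase v) else S

/-- The identified system `𝒜_I` for `I = {u, v}` (with `u` the kept representative). -/
def identifySystem [DecidableEq α] (u v : α) (F : Finset (Finset α)) : Finset (Finset α) :=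
  F.image (identifyBlock u v)

/-- The minimal members of a family with respect to inclusion. -/
def minimals [DecidableEq α] (F : Finset (Finset α)) : Finset (Finset α) :=
  F.filter (fun S => ∀ T ∈ F, T ⊆ S → T = S)

/-- `𝒜*_I`: the Sperner system of minimal members of the identified system. -/
def starMinor [DecidableEq α] (u v : α) (F : Finset (Finset α)) : Finset (Finset α) :=
  minimals (identifySystem u v F)

/-- Strong hypomorphism: for every two-element subset `I = {u, v}` of the ground set `A`,
the systems `F*_I` and `G*_I` (both over `A ∖ {v}`) are isomorphic. -/
def StronglyHypomorphic [DecidableEq α] (A : Finset α) (F G : Finset (Finset α)) : Prop :=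
  ∀ u ∈ A, ∀ v ∈ A, u ≠ v →
    SystemIso (A.erase v) (starMinor u v F) (A.erase v) (starMinor u v G)

/-- Hypomorphism: a bijection `φ` of the two-element subsets of the ground set `A`
such that `F*_I` is isomorphic to `G*_{φ I}` for every two-element subset `I`. -/
def Hypomorphic [DecidableEq α] (A : Finset α) (F G : Finset (Finset α)) : Prop :=
  ∃ φ : {P : Finset α // P ∈ A.powersetCard 2} ≃ {P : Finset α // P ∈ A.powersetCard 2},
    ∀ (P : {P : Finset α // P ∈ A.powersetCard 2}) (u v u' v' : α),
      u ≠ v → (P : Finset α) = {u, v} → u' ≠ v' → ((φ P : Finset α)) = {u', v'} →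
      SystemIso (A.erase v) (starMinor u v F) (A.erase v') (starMinor u' v' G)

end SetSystems

/-- The ground set `E_m`: two disjoint copies of `{1, …, m}` (modelled as `ZMod m`);
`Sum.inl i` is the unprimed element `i` and `Sum.inr i` is the primed element `i'`. -/
abbrev Em (m : ℕ) := ZMod m ⊕ ZMod m

/-- `A^m_J = J ∪ ({1,…,m} ∖ J)'`. -/
def AJ (m : ℕ) [NeZero m] (J : Finset (ZMod m)) : Finset (Em m) :=
  J.image Sum.inl ∪ Jᶜ.image Sum.inr

/-- `G^m_1 = {A^m_J : J ⊆ {1,…,m}, |J| odd}`. -/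
def G1 (m : ℕ) [NeZero m] : Finset (Finset (Em m)) :=
  ((Finset.univ : Finset (ZMod m)).powerset.filter fun J => Odd J.card).image (AJ m)

/-- `G^m_2 = {A^m_J : J ⊆ {1,…,m}, |J| even}`. -/
def G2 (m : ℕ) [NeZero m] : Finset (Finset (Em m)) :=
  ((Finset.univ : Finset (ZMod m)).powerset.filter fun J => Even J.card).image (AJ m)

/-- `F^m_p = E_m ∖ {p, p', (p+1)'}`. -/
def Fblock (m : ℕ) [NeZero m] (p : ZMod m) : Finset (Em m) :=
  Finset.univ \ {Sum.inl p, Sum.inr p, Sum.inr (p + 1)}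

/-- `F^m = {F^m_p : p ∈ {1,…,m}}`. -/
def Fsys (m : ℕ) [NeZero m] : Finset (Finset (Em m)) :=
  Finset.univ.image (Fblock m)

/-- `ℳ^m_1 = G^m_1 ∪ F^m`. -/
def M1 (m : ℕ) [NeZero m] : Finset (Finset (Em m)) := G1 m ∪ Fsys m

/-- `ℳ^m_2 = G^m_2 ∪ F^m`. -/
def M2 (m : ℕ) [NeZero m] : Finset (Finset (Em m)) := G2 m ∪ Fsys m

/-- `U^{2m+1}_i = {S ∪ {0} : S ∈ F}` over `E_m ∪ {0}`, where the new element `0`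
is modelled by `none : Option (Em m)`. -/
def Usmall (m : ℕ) [NeZero m] (F : Finset (Finset (Em m))) :
    Finset (Finset (Option (Em m))) :=
  F.image fun S => insert none (S.image some)

/-- `U^{2m+2}_i = {S ∪ {0} : S ∈ F} ∪ {{0, 0'}}` over `E_m ∪ {0, 0'}`, where the new
elements `0` and `0'` are modelled by `Sum.inr false` and `Sum.inr true`. -/
def Ubig (m : ℕ) [NeZero m] (F : Finset (Finset (Em m))) :
    Finset (Finset (Em m ⊕ Bool)) :=
  (F.image fun S => insert (Sum.inr false) (S.image Sum.inl)) ∪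
    {({Sum.inr false, Sum.inr true} : Finset (Em m ⊕ Bool))}

-- ===== auxiliary =====
section Aux
variable (m : ℕ) [NeZero m]
set_option linter.unusedSectionVars false

lemma zmod_one_ne_zero (hm : 3 ≤ m) : (1 : ZMod m) ≠ 0 := by
  have : ((1:ℕ) : ZMod m) ≠ ((0:ℕ) : ZMod m) := by
    intro h
    have := (ZMod.natCast_eq_natCast_iff' 1 0 m).mp h
    simp [Nat.mod_eq_of_lt (by omega : 1 < m)] at this
  simpa using this

lemma mem_AJ_inl (J : Finset (ZMod m)) (x : ZMod m) : Sum.inl x ∈ AJ m J ↔ x ∈ J := by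
  simp [AJ]

lemma mem_AJ_inr (J : Finset (ZMod m)) (x : ZMod m) : Sum.inr x ∈ AJ m J ↔ x ∉ J := by
  simp [AJ]

lemma AJ_inj {J K : Finset (ZMod m)} (h : AJ m J = AJ m K) : J = K := by
  ext x
  rw [← mem_AJ_inl m J x, ← mem_AJ_inl m K x, h]

lemma card_AJ (J : Finset (ZMod m)) : (AJ m J).card = m := by
  have hle := J.card_le_univ
  rw [ZMod.card] at hle
  rw [AJ, Finset.card_union_of_disjoint (by simp [Finset.disjoint_left]),
    Finset.card_image_of_injective _ Sum.inl_injective,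
    Finset.card_image_of_injective _ Sum.inr_injective, Finset.card_compl, ZMod.card]
  omega

def Tp (p : ZMod m) : Finset (Em m) := {Sum.inl p, Sum.inr p, Sum.inr (p + 1)}

lemma Fblock_eq (p : ZMod m) : Fblock m p = Finset.univ \ Tp m p := rfl

lemma mem_Tp_inl (p x : ZMod m) : Sum.inl x ∈ Tp m p ↔ x = p := by
  simp [Tp]

lemma mem_Tp_inr (p x : ZMod m) : Sum.inr x ∈ Tp m p ↔ x = p ∨ x = p + 1 := by
  simp [Tp]

lemma card_Tp (hm : 3 ≤ m) (p : ZMod m) : (Tp m p).card = 3 := by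
  have h1 : (1 : ZMod m) ≠ 0 := zmod_one_ne_zero m hm
  have : p ≠ p + 1 := by
    intro h; exact h1 (by linear_combination -h)
  rw [Tp, Finset.card_insert_of_notMem (by simp), Finset.card_insert_of_notMem (by simp [this]),
    Finset.card_singleton]

lemma card_Fblock (hm : 3 ≤ m) (p : ZMod m) : (Fblock m p).card = 2 * m - 3 := by
  rw [Fblock_eq, Finset.card_sdiff_of_subset (Finset.subset_univ _), card_Tp m hm, Finset.card_univ]
  simp [ZMod.card]
  ring_nf

lemma Fblock_inj (p q : ZMod m) (h : Fblock m p = Fblock m q) : p = q := by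
  have hp : Sum.inl p ∉ Fblock m p := by simp [Fblock_eq, mem_Tp_inl]
  rw [h] at hp
  simp [Fblock_eq, mem_Tp_inl, mem_Tp_inr] at hp
  exact hp

lemma mem_M_G1 {S : Finset (Em m)} (h : S ∈ G1 m) : ∃ J, Odd J.card ∧ AJ m J = S := by
  simp only [G1, Finset.mem_image, Finset.mem_filter] at h
  obtain ⟨J, ⟨_, hodd⟩, hJ⟩ := h
  exact ⟨J, hodd, hJ⟩

lemma Fblock_mem_M1 (p : ZMod m) : Fblock m p ∈ M1 m :=
  Finset.mem_union_right _ (Finset.mem_image_of_mem _ (Finset.mem_univ p))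

lemma Fblock_mem_M2 (p : ZMod m) : Fblock m p ∈ M2 m :=
  Finset.mem_union_right _ (Finset.mem_image_of_mem _ (Finset.mem_univ p))

end Aux

-- ===== core lemma, m ≥ 4 =====
lemma core_big (m : ℕ) [NeZero m] (hm : 4 ≤ m) (τ : Em m → Em m)
    (hτ : Function.Bijective τ) (h : (M1 m).image (fun S => S.image τ) = M2 m) : False := by
  have hm3 : 3 ≤ m := by omega
  have hinj : Function.Injective τ := hτ.1
  have himg : ∀ S ∈ M1 m, S.image τ ∈ M2 m := by
    intro S hS; rw [← h]; exact Finset.mem_image_of_mem _ hS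
  -- τ maps F blocks to F blocks
  have hF : ∀ p, ∃ q, (Fblock m p).image τ = Fblock m q := by
    intro p
    have h1 := himg _ (Fblock_mem_M1 m p)
    rcases Finset.mem_union.mp h1 with hg | hf
    · exfalso
      simp only [G2, Finset.mem_image, Finset.mem_filter] at hg
      obtain ⟨J, -, hJ⟩ := hg
      have hc1 : (AJ m J).card = m := card_AJ m J
      rw [hJ, Finset.card_image_of_injective _ hinj, card_Fblock m hm3] at hc1
      omega
    · obtain ⟨q, _, hq⟩ := Finset.mem_image.mp hf
      exact ⟨q, hq.symm⟩
  choose g hg using hF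
  have ginj : Function.Injective g := by
    intro p q hpq
    have : (Fblock m p).image τ = (Fblock m q).image τ := by rw [hg, hg, hpq]
    exact Fblock_inj m p q (Finset.image_injective hinj this)
  have gsurj : Function.Surjective g := Finite.injective_iff_surjective.mp ginj
  -- image of triples
  have hT : ∀ p, (Tp m p).image τ = Tp m (g p) := by
    intro p
    have h1 : (Finset.univ \ Fblock m p).image τ = Finset.univ \ Fblock m (g p) := by
      rw [Finset.image_sdiff _ _ hinj, Finset.image_univ_of_surjective hτ.2, hg]
    have heq : ∀ s : Finset (Em m), Finset.univ \ (Finset.univ \ s) = s := by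
      intro s
      rw [sdiff_sdiff_right_self, Finset.inf_eq_inter, Finset.univ_inter]
    rwa [Fblock_eq, Fblock_eq, heq, heq] at h1
  have hmemT : ∀ (x : Em m) (p : ZMod m), τ x ∈ Tp m (g p) ↔ x ∈ Tp m p := by
    intro x p
    rw [← hT]
    constructor
    · intro hx
      obtain ⟨a, ha, hax⟩ := Finset.mem_image.mp hx
      rwa [← hinj hax]
    · exact Finset.mem_image_of_mem _
  have h10 : (1 : ZMod m) ≠ 0 := zmod_one_ne_zero m hm3
  -- τ maps inl p to inl (g p)
  have hinl : ∀ p, τ (Sum.inl p) = Sum.inl (g p) := by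
    intro p
    have h1 : τ (Sum.inl p) ∈ Tp m (g p) := (hmemT _ p).mpr (by simp [mem_Tp_inl])
    match hx : τ (Sum.inl p) with
    | Sum.inl y =>
      rw [hx] at h1
      rw [(mem_Tp_inl m _ _).mp h1]
    | Sum.inr y =>
      exfalso
      obtain ⟨q1, hq1⟩ := gsurj y
      obtain ⟨q2, hq2⟩ := gsurj (y - 1)
      have m1 : τ (Sum.inl p) ∈ Tp m (g q1) := by rw [hx, mem_Tp_inr, hq1]; left; rfl
      have m2 : τ (Sum.inl p) ∈ Tp m (g q2) := by
        rw [hx, mem_Tp_inr, hq2]; right; ring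
      rw [hmemT, mem_Tp_inl] at m1 m2
      rw [← m1] at hq1; rw [← m2] at hq2
      have hy : y = y - 1 := hq1.symm.trans hq2
      exact h10 (by linear_combination hy)
  -- τ maps inr's to inr's
  have hinr : ∀ q, ∃ w, τ (Sum.inr q) = Sum.inr w := by
    intro q
    match hx : τ (Sum.inr q) with
    | Sum.inl z =>
      exfalso
      obtain ⟨q', hq'⟩ := gsurj z
      have : τ (Sum.inr q) = τ (Sum.inl q') := by rw [hx, hinl, hq']
      exact absurd (hinj this) (by simp)
    | Sum.inr w => exact ⟨w, rfl⟩
  -- the singleton set {0}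
  have hA0 : AJ m {0} ∈ M1 m := by
    apply Finset.mem_union_left
    apply Finset.mem_image_of_mem
    simp [Finset.mem_filter]
  have h2 := himg _ hA0
  have hK : ∃ K, Even K.card ∧ AJ m K = (AJ m {0}).image τ := by
    rcases Finset.mem_union.mp h2 with hg2 | hf2
    · simp only [G2, Finset.mem_image, Finset.mem_filter] at hg2
      obtain ⟨K, ⟨_, heven⟩, hKe⟩ := hg2
      exact ⟨K, heven, hKe⟩
    · exfalso
      obtain ⟨q, _, hq⟩ := Finset.mem_image.mp hf2
      have hc : ((AJ m {0}).image τ).card = m := by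
        rw [Finset.card_image_of_injective _ hinj, card_AJ]
      rw [← hq, card_Fblock m hm3] at hc
      omega
  obtain ⟨K, heven, hKe⟩ := hK
  have hKval : K = {g 0} := by
    ext x
    rw [← mem_AJ_inl m K x, hKe, Finset.mem_singleton]
    constructor
    · intro hx
      obtain ⟨a, ha, hax⟩ := Finset.mem_image.mp hx
      match a with
      | Sum.inl p =>
        rw [hinl] at hax
        have hp : p ∈ ({0} : Finset (ZMod m)) := (mem_AJ_inl m _ _).mp ha
        rw [Finset.mem_singleton] at hp
        rw [hp] at hax
        exact (Sum.inl.injEq _ _).mp hax |>.symm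
      | Sum.inr q =>
        obtain ⟨w, hw⟩ := hinr q
        rw [hw] at hax
        exact absurd hax (by simp)
    · rintro rfl
      exact Finset.mem_image.mpr ⟨Sum.inl 0, (mem_AJ_inl m _ _).mpr (Finset.mem_singleton_self 0),
        hinl 0⟩
  rw [hKval, Finset.card_singleton] at heven
  simp at heven

-- ===== m = 3 case =====
lemma core_three (τ : Em 3 → Em 3) (hτ : Function.Bijective τ)
    (h : (M1 3).image (fun S => S.image τ) = M2 3) : False := by
  have h2 : ∃ S ∈ M2 3, ∀ T ∈ M2 3, T ≠ S → (S ∩ T).card ≤ 1 := by decide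
  have h1 : ∀ S ∈ M1 3, ∃ T ∈ M1 3, T ≠ S ∧ 2 ≤ (S ∩ T).card := by decide
  obtain ⟨S0, hS0, hprop⟩ := h2
  rw [← h] at hS0
  obtain ⟨S, hS, rfl⟩ := Finset.mem_image.mp hS0
  obtain ⟨T, hT, hne, hcard⟩ := h1 S hS
  have hT' : T.image τ ∈ M2 3 := by rw [← h]; exact Finset.mem_image_of_mem _ hT
  have hne' : T.image τ ≠ S.image τ := fun e => hne (Finset.image_injective hτ.1 e)
  have hle := hprop _ hT' hne'
  rw [← Finset.image_inter _ _ hτ.1, Finset.card_image_of_injective _ hτ.1] at hle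
  omega

lemma core (m : ℕ) [NeZero m] (hm : 3 ≤ m) (τ : Em m → Em m)
    (hτ : Function.Bijective τ) (h : (M1 m).image (fun S => S.image τ) = M2 m) : False := by
  rcases Nat.lt_or_ge m 4 with h4 | h4
  · have : m = 3 := by omega
    subst this
    exact core_three τ hτ h
  · exact core_big m h4 τ hτ h

-- ===== reduction: Usmall =====
lemma red_small (m : ℕ) [NeZero m] (hm : 3 ≤ m) :
    ¬ SystemIso (Finset.univ : Finset (Option (Em m))) (Usmall m (M1 m))
      (Finset.univ : Finset (Option (Em m))) (Usmall m (M2 m)) := by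
  rintro ⟨σ, hbij, him⟩
  have hσ : Function.Bijective σ := Set.bijOn_univ.mp (by simpa using hbij)
  -- σ none belongs to every member of Usmall m (M2 m)
  have hmem : ∀ T ∈ Usmall m (M2 m), σ none ∈ T := by
    intro T hT
    rw [← him] at hT
    obtain ⟨S, hS, rfl⟩ := Finset.mem_image.mp hT
    apply Finset.mem_image_of_mem
    obtain ⟨S', _, rfl⟩ := Finset.mem_image.mp hS
    exact Finset.mem_insert_self _ _
  have hnone : σ none = none := by
    by_contra hne
    match hx : σ none with
    | none => exact hne hx
    | some (Sum.inl p) =>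
      have := hmem (insert none ((Fblock m p).image some))
        (Finset.mem_image_of_mem _ (Fblock_mem_M2 m p))
      rw [hx] at this
      simp only [Finset.mem_insert, Finset.mem_image] at this
      rcases this with h | ⟨a, ha, hae⟩
      · exact absurd h (by simp)
      · rw [Option.some_inj.mp hae] at ha
        simp [Fblock_eq, mem_Tp_inl] at ha
    | some (Sum.inr q) =>
      have := hmem (insert none ((Fblock m q).image some))
        (Finset.mem_image_of_mem _ (Fblock_mem_M2 m q))
      rw [hx] at this
      simp only [Finset.mem_insert, Finset.mem_image] at this
      rcases this with h | ⟨a, ha, hae⟩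
      · exact absurd h (by simp)
      · rw [Option.some_inj.mp hae] at ha
        simp [Fblock_eq, mem_Tp_inr] at ha
  -- extract τ
  have hsome : ∀ x : Em m, ∃ y, σ (some x) = some y := by
    intro x
    match hx : σ (some x) with
    | none => exact absurd (hσ.1 (hx.trans hnone.symm)) (by simp)
    | some y => exact ⟨y, rfl⟩
  choose τ hτ using hsome
  have hτbij : Function.Bijective τ := by
    constructor
    · intro a b hab
      have : σ (some a) = σ (some b) := by rw [hτ, hτ, hab]
      exact Option.some_inj.mp (hσ.1 this)
    · intro y
      obtain ⟨a, ha⟩ := hσ.2 (some y)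
      match a with
      | none => exact absurd (hnone.symm.trans ha) (by simp)
      | some x => exact ⟨x, Option.some_inj.mp ((hτ x).symm.trans ha)⟩
  -- the embedding e
  set e : Finset (Em m) → Finset (Option (Em m)) := fun S => insert none (S.image some) with he
  have hcomm : ∀ S : Finset (Em m), (e S).image σ = e (S.image τ) := by
    intro S
    rw [he]
    simp only [Finset.image_insert, hnone, Finset.image_image]
    congr 1
    exact Finset.image_congr (fun x _ => hτ x)
  have heinj : Function.Injective e := by
    intro S S' hSS
    ext x
    have h1 : some x ∈ e S ↔ some x ∈ e S' := by rw [hSS]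
    simpa [he, Finset.mem_insert] using h1
  have hco : ((fun S => Finset.image σ S) ∘ e) = (e ∘ fun S => Finset.image τ S) :=
    funext hcomm
  have hfinal : (M1 m).image (fun S => S.image τ) = M2 m := by
    apply Finset.image_injective heinj
    rw [Finset.image_image, ← hco]
    have hh := him
    rw [Usmall, Usmall, Finset.image_image] at hh
    exact hh
  exact core m hm τ hτbij hfinal

-- card of members
lemma card_mem_M1' (m : ℕ) [NeZero m] (hm : 3 ≤ m) {S : Finset (Em m)} (h : S ∈ M1 m) :
    3 ≤ S.card := by
  rcases Finset.mem_union.mp h with h1 | h1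
  · obtain ⟨J, -, rfl⟩ := Finset.mem_image.mp h1
    rw [card_AJ]; omega
  · obtain ⟨p, -, rfl⟩ := Finset.mem_image.mp h1
    rw [card_Fblock m hm]; omega

lemma card_mem_M2' (m : ℕ) [NeZero m] (hm : 3 ≤ m) {S : Finset (Em m)} (h : S ∈ M2 m) :
    3 ≤ S.card := by
  rcases Finset.mem_union.mp h with h1 | h1
  · obtain ⟨J, -, rfl⟩ := Finset.mem_image.mp h1
    rw [card_AJ]; omega
  · obtain ⟨p, -, rfl⟩ := Finset.mem_image.mp h1
    rw [card_Fblock m hm]; omega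

-- ===== reduction: Ubig =====
lemma red_big (m : ℕ) [NeZero m] (hm : 3 ≤ m) :
    ¬ SystemIso (Finset.univ : Finset (Em m ⊕ Bool)) (Ubig m (M1 m))
      (Finset.univ : Finset (Em m ⊕ Bool)) (Ubig m (M2 m)) := by
  rintro ⟨σ, hbij, him⟩
  have hσ : Function.Bijective σ := Set.bijOn_univ.mp (by simpa using hbij)
  set e : Finset (Em m) → Finset (Em m ⊕ Bool) :=
    fun S => insert (Sum.inr false) (S.image Sum.inl) with he
  set P : Finset (Em m ⊕ Bool) := {Sum.inr false, Sum.inr true} with hP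
  have hcardP : P.card = 2 := by
    rw [hP, Finset.card_insert_of_notMem (by simp), Finset.card_singleton]
  have hcarde : ∀ S : Finset (Em m), (e S).card = S.card + 1 := by
    intro S
    rw [he]
    rw [Finset.card_insert_of_notMem (by simp),
      Finset.card_image_of_injective _ Sum.inl_injective]
  have hUbig1 : Ubig m (M1 m) = (M1 m).image e ∪ {P} := rfl
  have hUbig2 : Ubig m (M2 m) = (M2 m).image e ∪ {P} := rfl
  have himg : ∀ T ∈ Ubig m (M1 m), T.image σ ∈ Ubig m (M2 m) := by
    intro T hT; rw [← him]; exact Finset.mem_image_of_mem _ hT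
  -- σ maps P to P
  have hPmem : P ∈ Ubig m (M1 m) := Finset.mem_union_right _ (Finset.mem_singleton_self P)
  have hPP : P.image σ = P := by
    have h1 := himg P hPmem
    rcases Finset.mem_union.mp h1 with h2 | h2
    · exfalso
      obtain ⟨S, hS, hSe⟩ := Finset.mem_image.mp h2
      have hc : (P.image σ).card = 2 := by
        rw [Finset.card_image_of_injective _ hσ.1, hcardP]
      rw [← hSe, hcarde] at hc
      have := card_mem_M2' m hm hS
      omega
    · exact Finset.mem_singleton.mp h2
  -- σ (inr false) = inr false
  have hmem : ∀ T ∈ Ubig m (M2 m), σ (Sum.inr false) ∈ T := by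
    intro T hT
    rw [← him] at hT
    obtain ⟨S, hS, rfl⟩ := Finset.mem_image.mp hT
    apply Finset.mem_image_of_mem
    rcases Finset.mem_union.mp hS with h2 | h2
    · obtain ⟨S', -, rfl⟩ := Finset.mem_image.mp h2
      exact Finset.mem_insert_self _ _
    · rw [Finset.mem_singleton.mp h2]
      exact Finset.mem_insert_self _ _
  have hfalse : σ (Sum.inr false) = Sum.inr false := by
    have h1 : σ (Sum.inr false) ∈ P := by
      rw [← hPP]
      exact Finset.mem_image_of_mem _ (by rw [hP]; exact Finset.mem_insert_self _ _)
    rw [hP] at h1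
    rcases Finset.mem_insert.mp h1 with h2 | h2
    · exact h2
    · exfalso
      rw [Finset.mem_singleton] at h2
      have h3 := hmem (e (Fblock m 0))
        (Finset.mem_union_left _ (Finset.mem_image_of_mem _ (Fblock_mem_M2 m 0)))
      rw [h2, he] at h3
      simp at h3
  have htrue : σ (Sum.inr true) = Sum.inr true := by
    have h1 : σ (Sum.inr true) ∈ P := by
      rw [← hPP]
      exact Finset.mem_image_of_mem _ (by rw [hP]; simp)
    rw [hP] at h1
    rcases Finset.mem_insert.mp h1 with h2 | h2
    · exfalso
      rw [← hfalse] at h2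
      have h4 : (Sum.inr true : Em m ⊕ Bool) = Sum.inr false := hσ.1 h2
      simp at h4
    · exact Finset.mem_singleton.mp h2
  -- extract τ
  have hsome : ∀ x : Em m, ∃ y, σ (Sum.inl x) = Sum.inl y := by
    intro x
    match hx : σ (Sum.inl x) with
    | Sum.inl y => exact ⟨y, rfl⟩
    | Sum.inr false => exact absurd (hσ.1 (hx.trans hfalse.symm)) (by simp)
    | Sum.inr true => exact absurd (hσ.1 (hx.trans htrue.symm)) (by simp)
  choose τ hτ using hsome
  have hτbij : Function.Bijective τ := by
    constructor
    · intro a b hab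
      have : σ (Sum.inl a) = σ (Sum.inl b) := by rw [hτ, hτ, hab]
      exact Sum.inl_injective (hσ.1 this)
    · intro y
      obtain ⟨a, ha⟩ := hσ.2 (Sum.inl y)
      match a with
      | Sum.inl x => exact ⟨x, Sum.inl_injective ((hτ x).symm.trans ha)⟩
      | Sum.inr false => exact absurd (hfalse.symm.trans ha) (by simp)
      | Sum.inr true => exact absurd (htrue.symm.trans ha) (by simp)
  -- commutation
  have hcomm : ∀ S : Finset (Em m), (e S).image σ = e (S.image τ) := by
    intro S
    rw [he]
    simp only [Finset.image_insert, hfalse, Finset.image_image]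
    congr 1
    exact Finset.image_congr (fun x _ => hτ x)
  have heinj : Function.Injective e := by
    intro S S' hSS
    ext x
    have h1 : Sum.inl x ∈ e S ↔ Sum.inl x ∈ e S' := by rw [hSS]
    simpa [he] using h1
  -- cancel P from the union
  have him2 : ((M1 m).image e).image (fun S => S.image σ) ∪ {P} = (M2 m).image e ∪ {P} := by
    have hh := him
    rw [hUbig1, hUbig2, Finset.image_union, Finset.image_singleton, hPP] at hh
    exact hh
  have hPnotinB : P ∉ (M2 m).image e := by
    intro hPin
    obtain ⟨S, hS, hSe⟩ := Finset.mem_image.mp hPin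
    have := hcarde S
    rw [hSe, hcardP] at this
    have := card_mem_M2' m hm hS
    omega
  have hPnotinA : P ∉ ((M1 m).image e).image (fun S => S.image σ) := by
    intro hPin
    obtain ⟨T, hT, hTe⟩ := Finset.mem_image.mp hPin
    obtain ⟨S, hS, rfl⟩ := Finset.mem_image.mp hT
    have hc : (e S).card = 2 := by
      rw [← Finset.card_image_of_injective (e S) hσ.1, hTe, hcardP]
    rw [hcarde] at hc
    have := card_mem_M1' m hm hS
    omega
  have himAB : ((M1 m).image e).image (fun S => S.image σ) = (M2 m).image e := by
    ext T
    constructor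
    · intro hT
      have := Finset.mem_union_left ({P} : Finset (Finset (Em m ⊕ Bool))) hT
      rw [him2] at this
      rcases Finset.mem_union.mp this with h2 | h2
      · exact h2
      · exact absurd (Finset.mem_singleton.mp h2 ▸ hT) hPnotinA
    · intro hT
      have := Finset.mem_union_left ({P} : Finset (Finset (Em m ⊕ Bool))) hT
      rw [← him2] at this
      rcases Finset.mem_union.mp this with h2 | h2
      · exact h2
      · exact absurd (Finset.mem_singleton.mp h2 ▸ hT) hPnotinB
  have hco : ((fun S => Finset.image σ S) ∘ e) = (e ∘ fun S => Finset.image τ S) :=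
    funext hcomm
  have hfinal : (M1 m).image (fun S => S.image τ) = M2 m := by
    apply Finset.image_injective heinj
    rw [Finset.image_image, ← hco]
    rw [Finset.image_image] at himAB
    exact himAB
  exact core m hm τ hτbij hfinal

/-- For every integer `m ≥ 3`, the Sperner systems `U^{2m+1}_1` and `U^{2m+1}_2`
(over `E_m ∪ {0}`) are not isomorphic, and the Sperner systems `U^{2m+2}_1` and
`U^{2m+2}_2` (over `E_m ∪ {0, 0'}`) are not isomorphic. -/
theorem statement3 (m : ℕ) (hm : 3 ≤ m) :
    letI : NeZero m := ⟨by omega⟩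
    (¬ SystemIso (Finset.univ : Finset (Option (Em m))) (Usmall m (M1 m))
        (Finset.univ : Finset (Option (Em m))) (Usmall m (M2 m))) ∧
    (¬ SystemIso (Finset.univ : Finset (Em m ⊕ Bool)) (Ubig m (M1 m))
        (Finset.univ : Finset (Em m ⊕ Bool)) (Ubig m (M2 m))) := by
  haveI : NeZero m := ⟨by omega⟩
  exact ⟨red_small m hm, red_big m hm⟩
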